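/- arXiv:1711.02428 — 2 statements merged into one kernel-verified Lean document; each statement's English description precedes it below -/
import Mathlib

section
/- (Theorem 3.2, Cheeger-type estimate for quantum graphs) For every nonzero test function f on the metric graph G one has α(G)²·‖f‖² ≤ 4·‖f′‖². Consequently, the bottom of the spectrum of the Kirchhoff Laplacian, λ₀(H) = inf over nonzero test functions f of ‖f′‖²/‖f‖², satisfies λ₀(H) ≥ α(G)²/4. -/
open scoped Classical ENNReal
open MeasureTheory

noncomputable section

/-- A real function on `[0, L]` which is continuous and piecewise continuously
differentiable: there is a finite partition `0 = x 0 < x 1 < ... < x n = L` such that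
on each closed piece the function has a continuous derivative. -/
def PiecewiseC1 (f : ℝ → ℝ) (L : ℝ) : Prop :=
  ContinuousOn f (Set.Icc 0 L) ∧
  ∃ (n : ℕ) (x : Fin (n + 1) → ℝ), x 0 = 0 ∧ x (Fin.last n) = L ∧ StrictMono x ∧
    ∀ i : Fin n, ∃ g : ℝ → ℝ,
      ContinuousOn g (Set.Icc (x i.castSucc) (x i.succ)) ∧
      ∀ t ∈ Set.Icc (x i.castSucc) (x i.succ),
        HasDerivWithinAt f (g t) (Set.Icc (x i.castSucc) (x i.succ)) t

/-- The underlying (unoriented) simple graph of a set of edges `E` with endpoint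
map `ends : E → V × V`. -/
def graphOf {V E : Type} (ends : E → V × V) : SimpleGraph V :=
  SimpleGraph.fromRel fun u v => ∃ e, ends e = (u, v)

/-- A metric graph: a connected, locally finite, simple combinatorial graph with
countably infinite vertex and edge sets, each edge having a finite positive length.
Each edge carries an (auxiliary) orientation given by `ends`. -/
structure MetricGraph : Type 1 where
  V : Type
  E : Type
  countV : Countable V
  infV : Infinite V
  countE : Countable E
  infE : Infinite E
  ends : E → V × V
  len : E → ℝ
  len_pos : ∀ e, 0 < len e
  no_loops : ∀ e, (ends e).1 ≠ (ends e).2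
  no_multi : Function.Injective fun e => Sym2.mk (ends e)
  locfin : ∀ v, {e | (ends e).1 = v ∨ (ends e).2 = v}.Finite
  conn : (graphOf ends).Connected

namespace MetricGraph

/-- The underlying simple graph. -/
def graph (Γ : MetricGraph) : SimpleGraph Γ.V := graphOf Γ.ends

/-- The star of a vertex: the set of edges incident to it. -/
def star (Γ : MetricGraph) (v : Γ.V) : Set Γ.E :=
  {e | (Γ.ends e).1 = v ∨ (Γ.ends e).2 = v}

/-- Combinatorial degree of a vertex. -/
def degree (Γ : MetricGraph) (v : Γ.V) : ℕ := (Γ.locfin v).toFinset.card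

/-- The vertices of a (finite) subgraph given by a finite set of edges. -/
def vertsOf (Γ : MetricGraph) (F : Finset Γ.E) : Finset Γ.V :=
  F.image (fun e => (Γ.ends e).1) ∪ F.image fun e => (Γ.ends e).2

/-- The degree of a vertex inside the subgraph given by the edge set `F`. -/
def degIn (Γ : MetricGraph) (F : Finset Γ.E) (v : Γ.V) : ℕ :=
  (F.filter fun e => (Γ.ends e).1 = v ∨ (Γ.ends e).2 = v).card

/-- Connectedness of the subgraph spanned by the edge set `F`. -/
def SubConn (Γ : MetricGraph) (F : Finset Γ.E) : Prop :=
  ((SimpleGraph.fromRel fun u v => ∃ e ∈ F, Γ.ends e = (u, v)).induce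
    (↑(Γ.vertsOf F) : Set Γ.V)).Connected

/-- A finite connected subgraph (with at least one edge), given by its edge set. -/
def IsFinSubgraph (Γ : MetricGraph) (F : Finset Γ.E) : Prop :=
  F.Nonempty ∧ Γ.SubConn F

/-- The boundary of a finite subgraph with respect to `Γ`: the vertices whose degree
in the subgraph is strictly smaller than the degree in `Γ`. -/
def bdry (Γ : MetricGraph) (F : Finset Γ.E) : Finset Γ.V :=
  (Γ.vertsOf F).filter fun v => Γ.degIn F v < Γ.degree v

/-- `deg (∂_G G̃)`. -/
def degBdry (Γ : MetricGraph) (F : Finset Γ.E) : ℝ :=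
  ∑ v ∈ Γ.bdry F, (Γ.degIn F v : ℝ)

/-- The total length (Lebesgue measure) of a finite subgraph. -/
def mes (Γ : MetricGraph) (F : Finset Γ.E) : ℝ := ∑ e ∈ F, Γ.len e

/-- The isoperimetric (Cheeger) constant of a metric graph. -/
def alpha (Γ : MetricGraph) : ℝ :=
  sInf {r : ℝ | ∃ F : Finset Γ.E, Γ.IsFinSubgraph F ∧ r = Γ.degBdry F / Γ.mes F}

/-- The isoperimetric constant at infinity, as an element of `[0,∞]`. -/
def alphaEssEnn (Γ : MetricGraph) : ℝ≥0∞ :=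
  ⨆ W : Finset Γ.E, ⨅ (F : Finset Γ.E) (_ : Γ.IsFinSubgraph F ∧ Disjoint F W),
    ENNReal.ofReal (Γ.degBdry F / Γ.mes F)

/-- The vertex weight `m(v) = Σ_{e ∈ E_v} |e|`. -/
def mweight (Γ : MetricGraph) (v : Γ.V) : ℝ :=
  ∑ e ∈ (Γ.locfin v).toFinset, Γ.len e

/-- The set of boundary edges of a vertex set: edges with exactly one endpoint in `X`. -/
def Eb (Γ : MetricGraph) (X : Set Γ.V) : Set Γ.E :=
  {e | Xor' ((Γ.ends e).1 ∈ X) ((Γ.ends e).2 ∈ X)}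

/-- The discrete isoperimetric constant of a vertex set `U`. -/
def alphaD (Γ : MetricGraph) (U : Set Γ.V) : ℝ :=
  sInf {r : ℝ | ∃ X : Finset Γ.V, ↑X ⊆ U ∧ X.Nonempty ∧
    r = ((Γ.Eb ↑X).ncard : ℝ) / ∑ v ∈ X, Γ.mweight v}

/-- The discrete isoperimetric constant at infinity, as an element of `[0,∞]`. -/
def alphaDEssEnn (Γ : MetricGraph) : ℝ≥0∞ :=
  ⨆ X : Finset Γ.V, ENNReal.ofReal (Γ.alphaD (↑X : Set Γ.V)ᶜ)

/-- The combinatorial isoperimetric constant. -/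
def alphaComb (Γ : MetricGraph) : ℝ :=
  sInf {r : ℝ | ∃ X : Finset Γ.V, X.Nonempty ∧
    r = ((Γ.Eb ↑X).ncard : ℝ) / ∑ v ∈ X, (Γ.degree v : ℝ)}

/-- `ℓ*(G) = sup of edge lengths`. -/
def ellSup (Γ : MetricGraph) : ℝ := sSup (Set.range Γ.len)

/-- `ℓ_*(G) = inf of edge lengths`. -/
def ellInf (Γ : MetricGraph) : ℝ := sInf (Set.range Γ.len)

/-- `ℓ*(G)` as an element of `[0,∞]`. -/
def ellSupEnn (Γ : MetricGraph) : ℝ≥0∞ := ⨆ e : Γ.E, ENNReal.ofReal (Γ.len e)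

/-- `ℓ*_ess(G) = inf_F sup_{e ∉ F} |e|` as an element of `[0,∞]`. -/
def ellSupEssEnn (Γ : MetricGraph) : ℝ≥0∞ :=
  ⨅ W : Finset Γ.E, ⨆ e : {e : Γ.E // e ∉ W}, ENNReal.ofReal (Γ.len (e : Γ.E))

/-- Outgoing edges at a vertex (for the fixed orientation). -/
def plusE (Γ : MetricGraph) (v : Γ.V) : Set Γ.E := {e | (Γ.ends e).1 = v}

/-- Incoming edges at a vertex (for the fixed orientation). -/
def minusE (Γ : MetricGraph) (v : Γ.V) : Set Γ.E := {e | (Γ.ends e).2 = v}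

/-- The curvature `K(v) = ((#E_v⁺ − #E_v⁻)/#E_v⁺) · inf_{e ∈ E_v⁺} 1/|e|`. -/
def Kcurv (Γ : MetricGraph) (v : Γ.V) : ℝ :=
  (((Γ.plusE v).ncard : ℝ) - ((Γ.minusE v).ncard : ℝ)) / ((Γ.plusE v).ncard : ℝ) *
    sInf ((fun e => 1 / Γ.len e) '' Γ.plusE v)

/-- The combinatorial curvature `K_comb(v) = 1 − #E_v⁻/#E_v⁺`. -/
def Kcomb (Γ : MetricGraph) (v : Γ.V) : ℝ :=
  1 - ((Γ.minusE v).ncard : ℝ) / ((Γ.plusE v).ncard : ℝ)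

/-- `liminf_{v ∈ V} K(v) = sup over finite W of inf_{v ∉ W} K(v)`, in `[0,∞]`. -/
def KcurvEssEnn (Γ : MetricGraph) : ℝ≥0∞ :=
  ⨆ W : Finset Γ.V, ⨅ v : {v : Γ.V // v ∉ W}, ENNReal.ofReal (Γ.Kcurv (v : Γ.V))

/-- `liminf_{v ∈ V} K_comb(v) = sup over finite W of inf_{v ∉ W} K_comb(v)`. -/
def KcombLiminf (Γ : MetricGraph) : ℝ :=
  sSup (Set.range fun W : Finset Γ.V => sInf (Γ.Kcomb '' (↑W : Set Γ.V)ᶜ))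

/-- The value of an edgewise function at an endpoint of an edge. -/
def endVal (Γ : MetricGraph) (f : Γ.E → ℝ → ℝ) (e : Γ.E) (v : Γ.V) : ℝ :=
  if (Γ.ends e).1 = v then f e 0 else f e (Γ.len e)

/-- A test function on the metric graph `Γ`: a family of continuous, piecewise `C¹`
functions on the edges, matching at the vertices, vanishing on all but finitely
many edges. -/
structure TestFun (Γ : MetricGraph) where
  f : Γ.E → ℝ → ℝ
  piecewise : ∀ e, PiecewiseC1 (f e) (Γ.len e)
  vertexCont : ∀ e e' : Γ.E, ∀ v : Γ.V, e ∈ Γ.star v → e' ∈ Γ.star v →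
    Γ.endVal f e v = Γ.endVal f e' v
  finSupp : {e : Γ.E | ∃ x ∈ Set.Icc 0 (Γ.len e), f e x ≠ 0}.Finite

/-- `‖f‖² = Σ_e ∫₀^{|e|} f_e(x)² dx`. -/
def TestFun.normSq {Γ : MetricGraph} (φ : TestFun Γ) : ℝ :=
  ∑ᶠ e : Γ.E, ∫ x in (0:ℝ)..Γ.len e, (φ.f e x) ^ 2

/-- `‖f′‖² = Σ_e ∫₀^{|e|} f_e′(x)² dx`. -/
def TestFun.energySq {Γ : MetricGraph} (φ : TestFun Γ) : ℝ :=
  ∑ᶠ e : Γ.E, ∫ x in (0:ℝ)..Γ.len e, (deriv (φ.f e) x) ^ 2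

/-- A test function is nonzero if it does not vanish identically on the graph. -/
def TestFun.Nonzero {Γ : MetricGraph} (φ : TestFun Γ) : Prop :=
  ∃ e : Γ.E, ∃ x ∈ Set.Icc 0 (Γ.len e), φ.f e x ≠ 0

/-- The bottom of the spectrum of the Kirchhoff Laplacian, via the variational
(Rayleigh quotient) characterization. -/
def lambda0 (Γ : MetricGraph) : ℝ :=
  sInf {r : ℝ | ∃ φ : TestFun Γ, φ.Nonzero ∧ r = φ.energySq / φ.normSq}

end MetricGraph

/-- A weighted graph `(V, m, b)`: a connected, locally finite, simple combinatorial
graph with countably infinite vertex and edge sets, an edge weight `b` and a vertex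
weight `m`. -/
structure WeightedGraph : Type 1 where
  V : Type
  E : Type
  countV : Countable V
  infV : Infinite V
  countE : Countable E
  infE : Infinite E
  ends : E → V × V
  no_loops : ∀ e, (ends e).1 ≠ (ends e).2
  no_multi : Function.Injective fun e => Sym2.mk (ends e)
  locfin : ∀ v, {e | (ends e).1 = v ∨ (ends e).2 = v}.Finite
  conn : (graphOf ends).Connected
  b : E → ℝ
  b_pos : ∀ e, 0 < b e
  m : V → ℝ
  m_pos : ∀ v, 0 < m v

namespace WeightedGraph

/-- An edge weight `d` is intrinsic if `Σ_{e ∈ E_v} d(e)² b(e) ≤ m(v)` for all `v`. -/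
def Intrinsic (Γ : WeightedGraph) (d : Γ.E → ℝ) : Prop :=
  ∀ v, ∑ e ∈ (Γ.locfin v).toFinset, d e ^ 2 * Γ.b e ≤ Γ.m v

/-- The boundary edges of a vertex set: edges with exactly one endpoint in `X`. -/
def Eb (Γ : WeightedGraph) (X : Set Γ.V) : Set Γ.E :=
  {e | Xor' ((Γ.ends e).1 ∈ X) ((Γ.ends e).2 ∈ X)}

/-- The discrete isoperimetric constant `α_d(U)` with respect to the weight `d`. -/
def alphaD (Γ : WeightedGraph) (d : Γ.E → ℝ) (U : Set Γ.V) : ℝ :=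
  sInf {r : ℝ | ∃ X : Finset Γ.V, ↑X ⊆ U ∧ X.Nonempty ∧
    r = (∑ᶠ e ∈ Γ.Eb ↑X, d e * Γ.b e) / ∑ v ∈ X, Γ.m v}

/-- The discrete isoperimetric constant at infinity, in `[0,∞]`. -/
def alphaDEssEnn (Γ : WeightedGraph) (d : Γ.E → ℝ) : ℝ≥0∞ :=
  ⨆ X : Finset Γ.V, ENNReal.ofReal (Γ.alphaD d (↑X : Set Γ.V)ᶜ)

/-- The energy form `Q(u) = Σ_e b(e) (u(e_i) − u(e_0))²`. -/
def Q (Γ : WeightedGraph) (u : Γ.V → ℝ) : ℝ :=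
  ∑ᶠ e : Γ.E, Γ.b e * (u (Γ.ends e).2 - u (Γ.ends e).1) ^ 2

/-- The squared norm `Σ_v m(v) u(v)²`. -/
def normSqD (Γ : WeightedGraph) (u : Γ.V → ℝ) : ℝ :=
  ∑ᶠ v : Γ.V, Γ.m v * u v ^ 2

/-- The bottom of the spectrum of the Friedrichs extension of the weighted Laplacian,
via the variational characterization over finitely supported functions. -/
def lambda0 (Γ : WeightedGraph) : ℝ :=
  sInf {r : ℝ | ∃ u : Γ.V → ℝ, (Function.support u).Finite ∧ u ≠ 0 ∧
    r = Γ.Q u / Γ.normSqD u}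

/-- The bottom of the essential spectrum of the Friedrichs extension, via Glazman's
decomposition principle, in `[0,∞]`. -/
def lambda0EssEnn (Γ : WeightedGraph) : ℝ≥0∞ :=
  ⨆ X : Finset Γ.V, ⨅ (u : Γ.V → ℝ)
    (_ : (Function.support u).Finite ∧ u ≠ 0 ∧ ∀ v ∈ X, u v = 0),
      ENNReal.ofReal (Γ.Q u / Γ.normSqD u)

end WeightedGraph

end

/-!
For a test function `φ` and a level `t > 0`, the edges on which `φ²` exceeds `t` form a finite
edge set `F_t` with `α · mes F_t ≤ deg ∂F_t` (after splitting `F_t` into connected pieces). At a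
boundary vertex of `F_t` some incident edge lies outside `F_t`, so `φ² ≤ t` there, and `φ²` has to
cross the level `t` along every edge of `F_t` at that vertex. Integrating over `t` (layer cake),
`α ‖φ‖²` is bounded by the variation of `φ²` along the edges, which is at most
`∫ 2 |φ| |φ'| ≤ (α / 2) ‖φ‖² + (2 / α) ‖φ'‖²`; this rearranges to `α² ‖φ‖² ≤ 4 ‖φ'‖²`.
-/

namespace MetricGraph

variable {Γ : MetricGraph}

lemma mem_vertsOf {F : Finset Γ.E} {v : Γ.V} :
    v ∈ Γ.vertsOf F ↔ ∃ e ∈ F, e ∈ Γ.star v := by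
  simp only [vertsOf, star, Finset.mem_union, Finset.mem_image, Set.mem_ofPred_eq]
  grind

lemma exists_notMem_of_mem_bdry {F : Finset Γ.E} {v : Γ.V} (hv : v ∈ Γ.bdry F) :
    ∃ e ∈ Γ.star v, e ∉ F := by
  by_contra! h
  have hsub : (Γ.locfin v).toFinset ⊆ F.filter fun e => (Γ.ends e).1 = v ∨ (Γ.ends e).2 = v :=
    fun e he => Finset.mem_filter.2 ⟨h e ((Γ.locfin v).mem_toFinset.1 he),
      (Γ.locfin v).mem_toFinset.1 he⟩
  exact (Finset.mem_filter.1 hv).2.not_ge (Finset.card_le_card hsub)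

section Split

variable {F : Finset Γ.E} {P : Γ.V → Prop} [DecidablePred P]

lemma mem_vertsOf_filter (hP : ∀ e ∈ F, P (Γ.ends e).1 ↔ P (Γ.ends e).2) {v : Γ.V} :
    v ∈ Γ.vertsOf (F.filter fun e => P (Γ.ends e).1) ↔ v ∈ Γ.vertsOf F ∧ P v := by
  simp only [mem_vertsOf, Finset.mem_filter, star, Set.mem_ofPred_eq]
  grind

lemma degIn_filter (hP : ∀ e ∈ F, P (Γ.ends e).1 ↔ P (Γ.ends e).2) {v : Γ.V} (hv : P v) :
    Γ.degIn (F.filter fun e => P (Γ.ends e).1) v = Γ.degIn F v := by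
  simp only [degIn, Finset.filter_filter]
  congr 1
  grind

lemma degBdry_filter (hP : ∀ e ∈ F, P (Γ.ends e).1 ↔ P (Γ.ends e).2) :
    Γ.degBdry (F.filter fun e => P (Γ.ends e).1) =
      ∑ v ∈ (Γ.bdry F).filter P, (Γ.degIn F v : ℝ) := by
  have hbdry : Γ.bdry (F.filter fun e => P (Γ.ends e).1) = (Γ.bdry F).filter P := by
    ext v
    simp only [bdry, Finset.mem_filter, mem_vertsOf_filter hP]
    grind [degIn_filter hP]
  rw [degBdry, hbdry]
  exact Finset.sum_congr rfl fun v hv => by rw [degIn_filter hP (Finset.mem_filter.1 hv).2]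

lemma degBdry_eq_add (hP : ∀ e ∈ F, P (Γ.ends e).1 ↔ P (Γ.ends e).2) :
    Γ.degBdry F = Γ.degBdry (F.filter fun e => P (Γ.ends e).1) +
      Γ.degBdry (F.filter fun e => ¬P (Γ.ends e).1) := by
  rw [degBdry_filter hP, degBdry_filter (P := fun v => ¬P v) fun e he => not_congr (hP e he),
    Finset.sum_filter_add_sum_filter_not, degBdry]

end Split

def spanGraph (F : Finset Γ.E) : SimpleGraph Γ.V :=
  SimpleGraph.fromRel fun u v => ∃ e ∈ F, Γ.ends e = (u, v)

lemma spanGraph_adj_ends {F : Finset Γ.E} {e : Γ.E} (he : e ∈ F) :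
    (Γ.spanGraph F).Adj (Γ.ends e).1 (Γ.ends e).2 :=
  (SimpleGraph.fromRel_adj _ _ _).2 ⟨Γ.no_loops e, Or.inl ⟨e, he, rfl⟩⟩

lemma mem_vertsOf_of_spanGraph_adj {F : Finset Γ.E} {u w : Γ.V}
    (h : (Γ.spanGraph F).Adj u w) : u ∈ Γ.vertsOf F := by
  obtain ⟨-, ⟨e, he, hue⟩ | ⟨e, he, hwe⟩⟩ := (SimpleGraph.fromRel_adj _ _ _).1 h
  · exact mem_vertsOf.2 ⟨e, he, Or.inl (by rw [hue])⟩
  · exact mem_vertsOf.2 ⟨e, he, Or.inr (by rw [hwe])⟩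

lemma mem_vertsOf_of_mem_support {F : Finset Γ.E} {u w : Γ.V} (p : (Γ.spanGraph F).Walk u w)
    (hu : u ∈ Γ.vertsOf F) {x : Γ.V} (hx : x ∈ p.support) : x ∈ Γ.vertsOf F := by
  induction p with
  | nil => simp_all
  | cons h p ih =>
    rw [SimpleGraph.Walk.support_cons, List.mem_cons] at hx
    rcases hx with rfl | hx
    exacts [hu, ih (mem_vertsOf_of_spanGraph_adj h.symm) hx]

lemma subConn_of_forall_reachable {F : Finset Γ.E} {v₀ : Γ.V} (hv₀ : v₀ ∈ Γ.vertsOf F)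
    (h : ∀ u ∈ Γ.vertsOf F, (Γ.spanGraph F).Reachable v₀ u) : Γ.SubConn F := by
  refine SimpleGraph.induce_connected_of_patches v₀ hv₀ fun {u} hu => ?_
  obtain ⟨p⟩ := h u hu
  exact ⟨{x | x ∈ p.support}, fun x => mem_vertsOf_of_mem_support p hv₀, p.start_mem_support,
    p.end_mem_support, p.connected_induce_support.preconnected _ _⟩

lemma mes_pos {F : Finset Γ.E} (hF : F.Nonempty) : 0 < Γ.mes F :=
  Finset.sum_pos (fun e _ => Γ.len_pos e) hF

lemma degBdry_div_mes_nonneg (F : Finset Γ.E) : 0 ≤ Γ.degBdry F / Γ.mes F :=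
  div_nonneg (Finset.sum_nonneg fun _ _ => Nat.cast_nonneg _)
    (Finset.sum_nonneg fun e _ => (Γ.len_pos e).le)

lemma alpha_nonneg : 0 ≤ Γ.alpha :=
  Real.sInf_nonneg <| by rintro r ⟨F, -, rfl⟩; exact degBdry_div_mes_nonneg F

lemma alpha_mul_mes_le_of_isFinSubgraph {F : Finset Γ.E} (hF : Γ.IsFinSubgraph F) :
    Γ.alpha * Γ.mes F ≤ Γ.degBdry F :=
  (le_div_iff₀ (mes_pos hF.1)).1 <|
    csInf_le ⟨0, by rintro r ⟨F, -, rfl⟩; exact degBdry_div_mes_nonneg F⟩ ⟨F, hF, rfl⟩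

/-- Disconnected edge sets split along a connected component, on which both sides of the
inequality are additive. -/
theorem alpha_mul_mes_le_degBdry (F : Finset Γ.E) : Γ.alpha * Γ.mes F ≤ Γ.degBdry F := by
  induction F using Finset.strongInduction with
  | H F ih =>
  rcases F.eq_empty_or_nonempty with rfl | ⟨e₀, he₀⟩
  · simp [mes, degBdry, bdry, vertsOf]
  by_cases hconn : Γ.SubConn F
  · exact alpha_mul_mes_le_of_isFinSubgraph ⟨⟨e₀, he₀⟩, hconn⟩
  set P : Γ.V → Prop := (Γ.spanGraph F).Reachable (Γ.ends e₀).1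
  have hP : ∀ e ∈ F, P (Γ.ends e).1 ↔ P (Γ.ends e).2 := fun e he =>
    ⟨fun h => h.trans (spanGraph_adj_ends he).reachable,
      fun h => h.trans (spanGraph_adj_ends he).symm.reachable⟩
  have hsplit : ∃ e ∈ F, ¬P (Γ.ends e).1 := by
    by_contra! hall
    refine hconn (subConn_of_forall_reachable (mem_vertsOf.2 ⟨e₀, he₀, Or.inl rfl⟩) ?_)
    intro u hu
    obtain ⟨e, he, rfl | rfl⟩ := mem_vertsOf.1 hu
    exacts [hall e he, (hP e he).1 (hall e he)]
  have h₁ := ih _ (Finset.filter_ssubset.2 hsplit)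
  have h₂ := ih _ ((Finset.filter_ssubset (p := fun e => ¬P (Γ.ends e).1)).2
    ⟨e₀, he₀, not_not.2 (SimpleGraph.Reachable.refl _)⟩)
  have hmes : Γ.mes F = Γ.mes (F.filter fun e => P (Γ.ends e).1) +
      Γ.mes (F.filter fun e => ¬P (Γ.ends e).1) :=
    (Finset.sum_filter_add_sum_filter_not _ _ _).symm
  rw [degBdry_eq_add hP, hmes, mul_add]
  exact add_le_add h₁ h₂

lemma degBdry_le_sum_of_forall_bdry {F : Finset Γ.E} (Q : Γ.E → Γ.V → Prop)
    (hQ : ∀ v ∈ Γ.bdry F, ∀ e ∈ F, e ∈ Γ.star v → Q e v) :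
    Γ.degBdry F ≤ ∑ e ∈ F,
      ((if Q e (Γ.ends e).1 then 1 else 0) + (if Q e (Γ.ends e).2 then 1 else 0) : ℝ) := by
  calc Γ.degBdry F
      = ∑ e ∈ F,
          (((Γ.bdry F).filter fun v => (Γ.ends e).1 = v ∨ (Γ.ends e).2 = v).card : ℝ) := by
        simp only [degBdry, degIn, Finset.card_filter]
        push_cast
        exact Finset.sum_comm
    _ ≤ ∑ e ∈ F, ((({(Γ.ends e).1, (Γ.ends e).2} : Finset Γ.V).filter (Q e)).card : ℝ) := by
        refine Finset.sum_le_sum fun e he => ?_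
        refine Nat.cast_le.2 (Finset.card_le_card fun v hv => ?_)
        obtain ⟨hvb, hve⟩ := Finset.mem_filter.1 hv
        refine Finset.mem_filter.2 ⟨?_, hQ v hvb e he hve⟩
        rcases hve with h | h <;> simp [← h]
    _ = _ := by
        simp only [Finset.card_filter, Finset.sum_pair (Γ.no_loops _)]
        push_cast
        rfl

end MetricGraph

lemma Fin.exists_mem_Ioo_of_notMem_range {α : Type*} [LinearOrder α] {n : ℕ}
    {x : Fin (n + 1) → α} {u : α} (hu : u ∈ Set.Icc (x 0) (x (Fin.last n)))
    (hux : u ∉ Set.range x) : ∃ i : Fin n, u ∈ Set.Ioo (x i.castSucc) (x i.succ) := by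
  have hne : (Finset.univ.filter fun k => x k < u).Nonempty :=
    ⟨0, Finset.mem_filter.2 ⟨Finset.mem_univ _, hu.1.lt_of_ne fun h => hux ⟨0, h⟩⟩⟩
  obtain ⟨k, hk, hkmax⟩ : ∃ k ∈ Finset.univ.filter fun k => x k < u,
      ∀ j ∈ Finset.univ.filter fun k => x k < u, j ≤ k :=
    ⟨_, Finset.max'_mem _ hne, fun j hj => Finset.le_max' _ j hj⟩
  have hku : x k < u := (Finset.mem_filter.1 hk).2
  obtain ⟨i, rfl⟩ := (Fin.exists_castSucc_eq (i := k)).2 fun h => (h ▸ hku).not_ge hu.2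
  refine ⟨i, hku, lt_of_not_ge fun hi => ?_⟩
  rcases hi.lt_or_eq with hi | hi
  · exact (Fin.castSucc_lt_succ (i := i)).not_ge
      (hkmax _ (Finset.mem_filter.2 ⟨Finset.mem_univ _, hi⟩))
  · exact hux ⟨_, hi⟩

lemma two_mul_abs_mul_abs_le {a : ℝ} (ha : 0 < a) (y z : ℝ) :
    2 * |y| * |z| ≤ a * y ^ 2 + a⁻¹ * z ^ 2 := by
  have hsq : a * y ^ 2 + a⁻¹ * z ^ 2 - 2 * |y| * |z| = a⁻¹ * (a * |y| - |z|) ^ 2 := by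
    rw [← sq_abs y, ← sq_abs z]
    field_simp
    ring
  nlinarith [mul_nonneg (inv_nonneg.2 ha.le) (sq_nonneg (a * |y| - |z|))]

lemma integrable_indicator_Ico_one (a b : ℝ) :
    Integrable ((Set.Ico a b).indicator (1 : ℝ → ℝ)) :=
  (integrableOn_const (C := (1 : ℝ)) (by simp)).integrable_indicator measurableSet_Ico

namespace PiecewiseC1

variable {f : ℝ → ℝ} {L : ℝ}

lemma of_contDiff (hf : ContDiff ℝ 1 f) (hL : 0 < L) : PiecewiseC1 f L :=
  ⟨hf.continuous.continuousOn, 1, ![0, L], rfl, rfl,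
    Fin.strictMono_iff_lt_succ.2 fun i => by fin_cases i; simpa using hL,
    fun _ => ⟨deriv f, (hf.continuous_deriv le_rfl).continuousOn,
      fun t _ => (hf.differentiable one_ne_zero t).hasDerivAt.hasDerivWithinAt⟩⟩

lemma exists_finite_hasDerivAt_bounded (hf : PiecewiseC1 f L) :
    ∃ s : Set ℝ, s.Finite ∧ ∃ C, ∀ x ∈ Set.Icc 0 L \ s,
      HasDerivAt f (deriv f x) x ∧ |deriv f x| ≤ C := by
  obtain ⟨-, n, x, hx0, hxL, -, hpiece⟩ := hf
  choose g hgc hgd using hpiece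
  choose C hC using fun i => isCompact_Icc.exists_bound_of_continuousOn (hgc i)
  obtain ⟨B, hB⟩ := (Set.finite_range C).bddAbove
  refine ⟨Set.range x, Set.finite_range x, B, fun u ⟨hu, hux⟩ => ?_⟩
  rw [← hx0, ← hxL] at hu
  obtain ⟨i, hi⟩ := Fin.exists_mem_Ioo_of_notMem_range hu hux
  have hd := (hgd i u (Set.Ioo_subset_Icc_self hi)).hasDerivAt (Icc_mem_nhds hi.1 hi.2)
  rw [hd.deriv]
  exact ⟨hd, (hC i u (Set.Ioo_subset_Icc_self hi)).trans (hB ⟨i, rfl⟩)⟩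

lemma intervalIntegrable_comp (hf : PiecewiseC1 f L) {a b : ℝ} (ha : 0 ≤ a) (hab : a ≤ b)
    (hb : b ≤ L) {G : ℝ → ℝ → ℝ} (hG : Continuous (Function.uncurry G)) :
    IntervalIntegrable (fun x => G (f x) (deriv f x)) volume a b := by
  have hsub : Set.Ioc a b ⊆ Set.Icc 0 L := fun x hx => ⟨ha.trans hx.1.le, hx.2.trans hb⟩
  obtain ⟨s, hs, C, hC⟩ := hf.exists_finite_hasDerivAt_bounded
  obtain ⟨A, hA⟩ := isCompact_Icc.exists_bound_of_continuousOn hf.1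
  obtain ⟨M, hM⟩ := (isCompact_closedBall (0 : ℝ × ℝ) (max A C)).exists_bound_of_continuousOn
    hG.continuousOn
  rw [intervalIntegrable_iff_integrableOn_Ioc_of_le hab]
  refine ⟨hG.comp_aestronglyMeasurable₂ ((hf.1.mono hsub).aestronglyMeasurable measurableSet_Ioc)
    (measurable_deriv f).aestronglyMeasurable, HasFiniteIntegral.restrict_of_bounded M (by simp) ?_⟩
  filter_upwards [ae_restrict_mem measurableSet_Ioc,
    ae_restrict_of_ae (hs.countable.ae_notMem volume)] with x hx hxs
  refine hM (f x, deriv f x) ?_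
  rw [mem_closedBall_zero_iff, Prod.norm_def]
  exact max_le_max (hA x (hsub hx)) (hC x ⟨hsub hx, hxs⟩).2

lemma abs_sq_sub_sq_le (hf : PiecewiseC1 f L) {a b : ℝ} (ha : 0 ≤ a) (hab : a ≤ b)
    (hb : b ≤ L) : |f b ^ 2 - f a ^ 2| ≤ ∫ x in a..b, 2 * |f x| * |deriv f x| := by
  obtain ⟨s, hs, _, hs'⟩ := hf.exists_finite_hasDerivAt_bounded
  have hint : IntervalIntegrable (fun x => 2 * f x * deriv f x) volume a b :=
    hf.intervalIntegrable_comp ha hab hb (G := fun y z => 2 * y * z) (by fun_prop)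
  have hftc : ∫ x in a..b, 2 * f x * deriv f x = f b ^ 2 - f a ^ 2 := by
    refine integral_eq_of_hasDerivAt_off_countable_of_le (fun x => f x ^ 2) _ hab hs.countable
      ((hf.1.mono (Set.Icc_subset_Icc ha hb)).pow 2) (fun x hx => ?_) hint
    exact ((hs' x ⟨⟨ha.trans hx.1.1.le, hx.1.2.le.trans hb⟩, hx.2⟩).1.pow 2).congr_deriv
      (by norm_num)
  rw [← hftc]
  refine (intervalIntegral.abs_integral_le_integral_abs hab).trans_eq ?_
  simp only [abs_mul, abs_two]

/-- `f²` changes by at most `∫ 2 |f| |f'|` on `[0, c]` and on `[c, L]`; AM–GM then splits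
`2 |f| |f'|`. -/
theorem sq_sub_sq_add_sq_sub_sq_le (hf : PiecewiseC1 f L) {c : ℝ} (hc : c ∈ Set.Icc 0 L)
    {a : ℝ} (ha : 0 < a) :
    (f c ^ 2 - f 0 ^ 2) + (f c ^ 2 - f L ^ 2) ≤
      a * (∫ x in 0..L, f x ^ 2) + a⁻¹ * ∫ x in 0..L, deriv f x ^ 2 := by
  have hL := hc.1.trans hc.2
  have hint : ∀ {G : ℝ → ℝ → ℝ}, Continuous (Function.uncurry G) →
      IntervalIntegrable (fun x => G (f x) (deriv f x)) volume 0 L :=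
    hf.intervalIntegrable_comp le_rfl hL le_rfl
  have h₁ := hf.abs_sq_sub_sq_le le_rfl hc.1 hc.2
  have h₂ := hf.abs_sq_sub_sq_le hc.1 hc.2 le_rfl
  calc (f c ^ 2 - f 0 ^ 2) + (f c ^ 2 - f L ^ 2)
      ≤ (∫ x in 0..c, 2 * |f x| * |deriv f x|) + ∫ x in c..L, 2 * |f x| * |deriv f x| := by
        linarith [le_abs_self (f c ^ 2 - f 0 ^ 2), neg_abs_le (f L ^ 2 - f c ^ 2)]
    _ = ∫ x in 0..L, 2 * |f x| * |deriv f x| :=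
        intervalIntegral.integral_add_adjacent_intervals
          (hf.intervalIntegrable_comp le_rfl hc.1 hc.2 (G := fun y z => 2 * |y| * |z|)
            (by fun_prop))
          (hf.intervalIntegrable_comp hc.1 hc.2 le_rfl (G := fun y z => 2 * |y| * |z|)
            (by fun_prop))
    _ ≤ ∫ x in 0..L, (a * f x ^ 2 + a⁻¹ * deriv f x ^ 2) :=
        intervalIntegral.integral_mono_on hL (hint (G := fun y z => 2 * |y| * |z|) (by fun_prop))
          (hint (G := fun y z => a * y ^ 2 + a⁻¹ * z ^ 2) (by fun_prop))
          fun x _ => two_mul_abs_mul_abs_le ha _ _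
    _ = _ := by
        rw [intervalIntegral.integral_add ((hint (G := fun y _ => y ^ 2) (by fun_prop)).const_mul a)
          ((hint (G := fun _ z => z ^ 2) (by fun_prop)).const_mul a⁻¹),
          intervalIntegral.integral_const_mul, intervalIntegral.integral_const_mul]

end PiecewiseC1

namespace MetricGraph

namespace TestFun

variable {Γ : MetricGraph} (φ : TestFun Γ)

noncomputable def supp : Finset Γ.E := φ.finSupp.toFinset

lemma eq_zero_of_notMem_supp {e : Γ.E} (he : e ∉ φ.supp) {x : ℝ}
    (hx : x ∈ Set.Icc 0 (Γ.len e)) : φ.f e x = 0 := by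
  by_contra h
  exact he (φ.finSupp.mem_toFinset.2 ⟨x, hx, h⟩)

lemma normSq_eq_sum : φ.normSq = ∑ e ∈ φ.supp, ∫ x in 0..Γ.len e, φ.f e x ^ 2 := by
  refine finsum_eq_sum_of_support_subset _ fun e he => by_contra fun hs => he ?_
  dsimp only
  rw [intervalIntegral.integral_congr (g := fun _ => 0) fun x hx => ?_,
    intervalIntegral.integral_zero]
  rw [Set.uIcc_of_le (Γ.len_pos e).le] at hx
  simp [φ.eq_zero_of_notMem_supp hs hx]

lemma energySq_eq_sum :
    φ.energySq = ∑ e ∈ φ.supp, ∫ x in 0..Γ.len e, deriv (φ.f e) x ^ 2 := by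
  refine finsum_eq_sum_of_support_subset _ fun e he => by_contra fun hs => he ?_
  dsimp only
  rw [intervalIntegral.integral_of_le (Γ.len_pos e).le, integral_Ioc_eq_integral_Ioo]
  refine setIntegral_eq_zero_of_forall_eq_zero fun x hx => ?_
  have hzero : φ.f e =ᶠ[nhds x] fun _ => 0 := Filter.eventually_of_mem (Icc_mem_nhds hx.1 hx.2)
    fun y hy => φ.eq_zero_of_notMem_supp hs hy
  simp [hzero.deriv_eq]

lemma energySq_nonneg : 0 ≤ φ.energySq :=
  φ.energySq_eq_sum ▸ Finset.sum_nonneg fun e _ =>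
    intervalIntegral.integral_nonneg (Γ.len_pos e).le fun _ _ => sq_nonneg _

lemma normSq_pos (h : φ.Nonzero) : 0 < φ.normSq := by
  obtain ⟨e, x, hx, hfx⟩ := h
  rw [normSq_eq_sum]
  refine Finset.sum_pos' (fun e _ => intervalIntegral.integral_nonneg (Γ.len_pos e).le
    fun _ _ => sq_nonneg _) ⟨e, φ.finSupp.mem_toFinset.2 ⟨x, hx, hfx⟩, ?_⟩
  exact intervalIntegral.integral_pos (Γ.len_pos e) ((φ.piecewise e).1.pow 2)
    (fun _ _ => sq_nonneg _) ⟨x, hx, by positivity⟩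

noncomputable def peak (e : Γ.E) : ℝ := sSup ((fun x => φ.f e x ^ 2) '' Set.Icc 0 (Γ.len e))

lemma isCompact_image_sq (e : Γ.E) :
    IsCompact ((fun x => φ.f e x ^ 2) '' Set.Icc 0 (Γ.len e)) :=
  isCompact_Icc.image_of_continuousOn ((φ.piecewise e).1.pow 2)

lemma sq_le_peak {e : Γ.E} {x : ℝ} (hx : x ∈ Set.Icc 0 (Γ.len e)) : φ.f e x ^ 2 ≤ φ.peak e :=
  le_csSup (φ.isCompact_image_sq e).bddAbove ⟨x, hx, rfl⟩

lemma exists_sq_eq_peak (e : Γ.E) : ∃ c ∈ Set.Icc 0 (Γ.len e), φ.f e c ^ 2 = φ.peak e :=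
  (φ.isCompact_image_sq e).sSup_mem ((Set.nonempty_Icc.2 (Γ.len_pos e).le).image _)

noncomputable def levelEdges (t : ℝ) : Finset Γ.E := φ.supp.filter fun e => t < φ.peak e

lemma endVal_sq_le_of_mem_bdry {t : ℝ} (ht : 0 ≤ t) {v : Γ.V}
    (hv : v ∈ Γ.bdry (φ.levelEdges t)) {e : Γ.E} (he : e ∈ Γ.star v) :
    Γ.endVal φ.f e v ^ 2 ≤ t := by
  obtain ⟨e', he', he'F⟩ := exists_notMem_of_mem_bdry hv
  have hlow : ∀ x ∈ Set.Icc 0 (Γ.len e'), φ.f e' x ^ 2 ≤ t := by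
    intro x hx
    by_cases hs : e' ∈ φ.supp
    · exact (φ.sq_le_peak hx).trans (not_lt.1 fun h => he'F (Finset.mem_filter.2 ⟨hs, h⟩))
    · simpa [φ.eq_zero_of_notMem_supp hs hx] using ht
  rw [φ.vertexCont e e' v he he', endVal]
  split_ifs
  exacts [hlow 0 ⟨le_rfl, (Γ.len_pos e').le⟩, hlow _ ⟨(Γ.len_pos e').le, le_rfl⟩]

/-- Each edge `e` with `φ_e² ≤ t` at an endpoint but `t < peak e` must cross the level `t`;
`crossingCount φ t` counts these pairs of an edge and an endpoint. -/
noncomputable def crossingCount (t : ℝ) : ℝ :=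
  ∑ e ∈ φ.supp, ((Set.Ico (φ.f e 0 ^ 2) (φ.peak e)).indicator 1 t +
    (Set.Ico (φ.f e (Γ.len e) ^ 2) (φ.peak e)).indicator 1 t)

lemma crossingCount_nonneg (t : ℝ) : 0 ≤ φ.crossingCount t :=
  Finset.sum_nonneg fun _ _ => add_nonneg (Set.indicator_nonneg (fun _ _ => zero_le_one) _)
    (Set.indicator_nonneg (fun _ _ => zero_le_one) _)

lemma integrable_crossingCount : Integrable φ.crossingCount :=
  integrable_finsetSum _ fun _ _ =>
    (integrable_indicator_Ico_one _ _).add (integrable_indicator_Ico_one _ _)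

lemma integral_crossingCount : ∫ t, φ.crossingCount t =
    ∑ e ∈ φ.supp, ((φ.peak e - φ.f e 0 ^ 2) + (φ.peak e - φ.f e (Γ.len e) ^ 2)) := by
  unfold crossingCount
  rw [integral_finsetSum]
  · refine Finset.sum_congr rfl fun e _ => ?_
    rw [integral_add (integrable_indicator_Ico_one _ _) (integrable_indicator_Ico_one _ _),
      integral_indicator_one measurableSet_Ico, integral_indicator_one measurableSet_Ico,
      Real.volume_real_Ico_of_le (φ.sq_le_peak ⟨le_rfl, (Γ.len_pos e).le⟩),
      Real.volume_real_Ico_of_le (φ.sq_le_peak ⟨(Γ.len_pos e).le, le_rfl⟩)]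
  · exact fun _ _ => (integrable_indicator_Ico_one _ _).add (integrable_indicator_Ico_one _ _)

lemma alpha_mul_mes_levelEdges_le_crossingCount {t : ℝ} (ht : 0 ≤ t) :
    Γ.alpha * Γ.mes (φ.levelEdges t) ≤ φ.crossingCount t := by
  calc Γ.alpha * Γ.mes (φ.levelEdges t) ≤ Γ.degBdry (φ.levelEdges t) :=
        alpha_mul_mes_le_degBdry _
    _ ≤ ∑ e ∈ φ.levelEdges t, ((if Γ.endVal φ.f e (Γ.ends e).1 ^ 2 ≤ t then 1 else 0) +
          (if Γ.endVal φ.f e (Γ.ends e).2 ^ 2 ≤ t then 1 else 0) : ℝ) :=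
        degBdry_le_sum_of_forall_bdry (fun e v => Γ.endVal φ.f e v ^ 2 ≤ t)
          fun v hv _ _ he => φ.endVal_sq_le_of_mem_bdry ht hv he
    _ = ∑ e ∈ φ.levelEdges t, ((Set.Ico (φ.f e 0 ^ 2) (φ.peak e)).indicator 1 t +
          (Set.Ico (φ.f e (Γ.len e) ^ 2) (φ.peak e)).indicator 1 t) := by
        refine Finset.sum_congr rfl fun e he => ?_
        simp [endVal, Γ.no_loops e, Set.indicator_apply, (Finset.mem_filter.1 he).2]
    _ ≤ φ.crossingCount t :=
        Finset.sum_le_sum_of_subset_of_nonneg (Finset.filter_subset _ _) fun _ _ _ =>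
          add_nonneg (Set.indicator_nonneg (fun _ _ => zero_le_one) _)
            (Set.indicator_nonneg (fun _ _ => zero_le_one) _)

lemma sum_measure_lt_le_mes_levelEdges (t : ℝ) :
    ∑ e ∈ φ.supp, volume.restrict (Set.Ioc 0 (Γ.len e)) {x | t < φ.f e x ^ 2} ≤
      ENNReal.ofReal (Γ.mes (φ.levelEdges t)) := by
  rw [mes, ENNReal.ofReal_sum_of_nonneg fun e _ => (Γ.len_pos e).le, levelEdges, Finset.sum_filter]
  refine Finset.sum_le_sum fun e _ => ?_
  split_ifs with he
  · calc _ ≤ volume.restrict (Set.Ioc 0 (Γ.len e)) Set.univ := measure_mono (Set.subset_univ _)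
      _ = _ := by simp
  · rw [Measure.restrict_apply' measurableSet_Ioc]
    refine (measure_mono fun x hx => ?_).trans_eq measure_empty
    exact (not_lt.2 ((φ.sq_le_peak (Set.Ioc_subset_Icc_self hx.2)).trans (not_lt.1 he)) hx.1).elim

lemma ofReal_normSq_eq_lintegral_measure_lt :
    ENNReal.ofReal φ.normSq = ∫⁻ t in Set.Ioi 0,
      ∑ e ∈ φ.supp, volume.restrict (Set.Ioc 0 (Γ.len e)) {x | t < φ.f e x ^ 2} := by
  have hmono : ∀ e, Antitone fun t => volume.restrict (Set.Ioc 0 (Γ.len e)) {x | t < φ.f e x ^ 2} :=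
    fun e _ _ hst => measure_mono fun x (hx : _ < _) => hst.trans_lt hx
  rw [lintegral_finsetSum' _ fun e _ => (hmono e).measurable.aemeasurable, normSq_eq_sum,
    ENNReal.ofReal_sum_of_nonneg fun e _ =>
      intervalIntegral.integral_nonneg (Γ.len_pos e).le fun _ _ => sq_nonneg _]
  refine Finset.sum_congr rfl fun e _ => ?_
  have hcont : ContinuousOn (fun x => φ.f e x ^ 2) (Set.Icc 0 (Γ.len e)) := (φ.piecewise e).1.pow 2
  rw [intervalIntegral.integral_of_le (Γ.len_pos e).le,
    ofReal_integral_eq_lintegral_ofReal (hcont.integrableOn_Icc.mono_set Set.Ioc_subset_Icc_self)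
      (ae_of_all _ fun _ => sq_nonneg _)]
  exact lintegral_eq_lintegral_meas_lt _ (ae_of_all _ fun _ => sq_nonneg _)
    ((hcont.mono Set.Ioc_subset_Icc_self).aemeasurable measurableSet_Ioc)

/-- Layer-cake formula for `‖φ‖²`, integrated against the pointwise isoperimetric bound on
the superlevel sets of `φ²`. -/
theorem alpha_mul_normSq_le : Γ.alpha * φ.normSq ≤
    ∑ e ∈ φ.supp, ((φ.peak e - φ.f e 0 ^ 2) + (φ.peak e - φ.f e (Γ.len e) ^ 2)) := by
  rw [← φ.integral_crossingCount,
    ← ENNReal.ofReal_le_ofReal_iff (integral_nonneg φ.crossingCount_nonneg)]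
  calc ENNReal.ofReal (Γ.alpha * φ.normSq)
      = ∫⁻ t in Set.Ioi 0, ENNReal.ofReal Γ.alpha *
          ∑ e ∈ φ.supp, volume.restrict (Set.Ioc 0 (Γ.len e)) {x | t < φ.f e x ^ 2} := by
        rw [ENNReal.ofReal_mul alpha_nonneg, ofReal_normSq_eq_lintegral_measure_lt,
          lintegral_const_mul' _ _ ENNReal.ofReal_ne_top]
    _ ≤ ∫⁻ t in Set.Ioi 0, ENNReal.ofReal (φ.crossingCount t) := by
        refine setLIntegral_mono' measurableSet_Ioi fun t ht => ?_
        calc _ ≤ ENNReal.ofReal Γ.alpha * ENNReal.ofReal (Γ.mes (φ.levelEdges t)) :=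
              by gcongr; exact φ.sum_measure_lt_le_mes_levelEdges t
          _ = ENNReal.ofReal (Γ.alpha * Γ.mes (φ.levelEdges t)) :=
              (ENNReal.ofReal_mul alpha_nonneg).symm
          _ ≤ _ := ENNReal.ofReal_le_ofReal
              (φ.alpha_mul_mes_levelEdges_le_crossingCount (le_of_lt ht))
    _ ≤ ∫⁻ t, ENNReal.ofReal (φ.crossingCount t) := setLIntegral_le_lintegral _ _
    _ = ENNReal.ofReal (∫ t, φ.crossingCount t) :=
        (ofReal_integral_eq_lintegral_ofReal φ.integrable_crossingCount
          (ae_of_all _ φ.crossingCount_nonneg)).symm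

end TestFun

lemma exists_testFun_nonzero (Γ : MetricGraph) : ∃ φ : TestFun Γ, φ.Nonzero := by
  obtain ⟨e₀⟩ := @Infinite.nonempty _ Γ.infE
  let f : Γ.E → ℝ → ℝ := fun e x => if e = e₀ then x * (Γ.len e - x) else 0
  have hf_endVal : ∀ e v, Γ.endVal f e v = 0 := by
    intro e v
    unfold endVal
    split_ifs <;> simp [f]
  have hL := Γ.len_pos e₀
  refine ⟨⟨f, fun e => PiecewiseC1.of_contDiff ?_ (Γ.len_pos e),
    fun e e' v _ _ => by rw [hf_endVal, hf_endVal], (Set.finite_singleton e₀).subset ?_⟩,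
    e₀, Γ.len e₀ / 2, ⟨by linarith, by linarith⟩, ?_⟩
  · by_cases h : e = e₀ <;> simp only [f, h, if_true, if_false] <;> fun_prop
  · rintro e ⟨x, -, hx⟩
    rw [Set.mem_singleton_iff]
    by_contra h
    simp [f, h] at hx
  · simp only [f, if_true]
    exact (mul_pos (by linarith) (by linarith)).ne'

variable {Γ : MetricGraph}

/-- AM–GM with weight `α / 2` is what produces the constant `4`. -/
theorem TestFun.alpha_sq_mul_normSq_le (φ : TestFun Γ) :
    Γ.alpha ^ 2 * φ.normSq ≤ 4 * φ.energySq := by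
  rcases alpha_nonneg.eq_or_lt with hα | hα
  · rw [← hα]
    simpa using φ.energySq_nonneg
  have key : Γ.alpha * φ.normSq ≤ Γ.alpha / 2 * φ.normSq + (Γ.alpha / 2)⁻¹ * φ.energySq := by
    calc Γ.alpha * φ.normSq
        ≤ ∑ e ∈ φ.supp, ((φ.peak e - φ.f e 0 ^ 2) + (φ.peak e - φ.f e (Γ.len e) ^ 2)) :=
          φ.alpha_mul_normSq_le
      _ ≤ ∑ e ∈ φ.supp, (Γ.alpha / 2 * (∫ x in 0..Γ.len e, φ.f e x ^ 2) +
            (Γ.alpha / 2)⁻¹ * ∫ x in 0..Γ.len e, deriv (φ.f e) x ^ 2) := by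
          refine Finset.sum_le_sum fun e _ => ?_
          obtain ⟨c, hc, hpeak⟩ := φ.exists_sq_eq_peak e
          rw [← hpeak]
          exact (φ.piecewise e).sq_sub_sq_add_sq_sub_sq_le hc (by positivity)
      _ = _ := by
          rw [Finset.sum_add_distrib, ← Finset.mul_sum, ← Finset.mul_sum, ← normSq_eq_sum,
            ← energySq_eq_sum]
  rw [inv_div] at key
  calc Γ.alpha ^ 2 * φ.normSq = 2 * Γ.alpha * (Γ.alpha / 2 * φ.normSq) := by ring
    _ ≤ 2 * Γ.alpha * (2 / Γ.alpha * φ.energySq) :=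
        mul_le_mul_of_nonneg_left (by linarith) (by positivity)
    _ = 4 * φ.energySq := by field_simp; ring

end MetricGraph

/-- **Theorem 3.2 (Cheeger-type estimate for quantum graphs).**
For every nonzero test function `f` on the metric graph `G` one has
`α(G)²·‖f‖² ≤ 4·‖f′‖²`; consequently `λ₀(H) ≥ α(G)²/4`. -/
theorem cheeger_estimate_quantum_graph (Γ : MetricGraph) :
    (∀ φ : MetricGraph.TestFun Γ, φ.Nonzero →
      Γ.alpha ^ 2 * φ.normSq ≤ 4 * φ.energySq) ∧
    Γ.alpha ^ 2 / 4 ≤ Γ.lambda0 := by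
  refine ⟨fun φ _ => φ.alpha_sq_mul_normSq_le, le_csInf ?_ ?_⟩
  · obtain ⟨φ, hφ⟩ := Γ.exists_testFun_nonzero
    exact ⟨_, φ, hφ, rfl⟩
  · rintro r ⟨φ, hφ, rfl⟩
    rw [le_div_iff₀ (φ.normSq_pos hφ)]
    linarith [φ.alpha_sq_mul_normSq_le]
end

section
/- (Lemma 4.1, second inequality) The metric and discrete isoperimetric constants satisfy 2/α(G) ≤ 1/α_d(V) + ℓ*(G), with the convention 1/0 = +∞; equivalently, 2·α_d(V) ≤ α(G)·(1 + ℓ*(G)·α_d(V)). -/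
open scoped Classical ENNReal
open MeasureTheory

section Aux

namespace MetricGraph

variable (Γ : MetricGraph)

lemma mem_locfin_toFinset {v : Γ.V} {e : Γ.E} :
    e ∈ (Γ.locfin v).toFinset ↔ (Γ.ends e).1 = v ∨ (Γ.ends e).2 = v :=
  Set.Finite.mem_toFinset _

lemma mem_vertsOf_of_fst {F : Finset Γ.E} {e : Γ.E} (he : e ∈ F) :
    (Γ.ends e).1 ∈ Γ.vertsOf F :=
  Finset.mem_union_left _ (Finset.mem_image.mpr ⟨e, he, rfl⟩)

lemma mem_vertsOf_of_snd {F : Finset Γ.E} {e : Γ.E} (he : e ∈ F) :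
    (Γ.ends e).2 ∈ Γ.vertsOf F :=
  Finset.mem_union_right _ (Finset.mem_image.mpr ⟨e, he, rfl⟩)

lemma degIn_le_degree (F : Finset Γ.E) (v : Γ.V) : Γ.degIn F v ≤ Γ.degree v := by
  apply Finset.card_le_card
  intro e he
  simp only [Finset.mem_filter] at he
  exact (Γ.mem_locfin_toFinset).mpr he.2

lemma filter_eq_of_full {F : Finset Γ.E} {v : Γ.V}
    (h : Γ.degree v ≤ Γ.degIn F v) :
    F.filter (fun e => (Γ.ends e).1 = v ∨ (Γ.ends e).2 = v) = (Γ.locfin v).toFinset := by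
  apply Finset.eq_of_subset_of_card_le
  · intro e he
    simp only [Finset.mem_filter] at he
    exact (Γ.mem_locfin_toFinset).mpr he.2
  · exact h

lemma mweight_nonneg (v : Γ.V) : 0 ≤ Γ.mweight v :=
  Finset.sum_nonneg fun e _ => (Γ.len_pos e).le

lemma mweight_pos_of_mem_vertsOf {F : Finset Γ.E} {v : Γ.V} (hv : v ∈ Γ.vertsOf F) :
    0 < Γ.mweight v := by
  obtain he | he := Finset.mem_union.mp hv
  · obtain ⟨e, he, rfl⟩ := Finset.mem_image.mp he
    exact Finset.sum_pos' (fun e _ => (Γ.len_pos e).le)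
      ⟨e, (Γ.mem_locfin_toFinset).mpr (Or.inl rfl), Γ.len_pos e⟩
  · obtain ⟨e, he, rfl⟩ := Finset.mem_image.mp he
    exact Finset.sum_pos' (fun e _ => (Γ.len_pos e).le)
      ⟨e, (Γ.mem_locfin_toFinset).mpr (Or.inr rfl), Γ.len_pos e⟩

/-- The double-counting identity: `2 mes F = Σ_{v ∈ V(F)} Σ_{e ∈ F, e ∋ v} |e|`. -/
lemma two_mes_eq (F : Finset Γ.E) :
    2 * Γ.mes F = ∑ v ∈ Γ.vertsOf F,
      ∑ e ∈ F.filter (fun e => (Γ.ends e).1 = v ∨ (Γ.ends e).2 = v), Γ.len e := by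
  have h1 : ∀ v ∈ Γ.vertsOf F,
      (∑ e ∈ F.filter (fun e => (Γ.ends e).1 = v ∨ (Γ.ends e).2 = v), Γ.len e)
        = ∑ e ∈ F, if (Γ.ends e).1 = v ∨ (Γ.ends e).2 = v then Γ.len e else 0 :=
    fun v _ => (Finset.sum_filter _ _)
  rw [Finset.sum_congr rfl h1, Finset.sum_comm]
  rw [mes, Finset.mul_sum]
  refine Finset.sum_congr rfl fun e he => ?_
  have hpair : (Γ.vertsOf F).filter (fun v => (Γ.ends e).1 = v ∨ (Γ.ends e).2 = v)
      = {(Γ.ends e).1, (Γ.ends e).2} := by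
    ext v
    simp only [Finset.mem_filter, Finset.mem_insert, Finset.mem_singleton]
    constructor
    · rintro ⟨hv, h | h⟩
      · exact Or.inl h.symm
      · exact Or.inr h.symm
    · rintro (rfl | rfl)
      · exact ⟨Γ.mem_vertsOf_of_fst he, Or.inl rfl⟩
      · exact ⟨Γ.mem_vertsOf_of_snd he, Or.inr rfl⟩
  rw [← Finset.sum_filter, hpair, Finset.sum_pair (Γ.no_loops e)]
  ring

/-- Boundary-edge counting: every edge leaving the interior `X` is an `F`-edge
incident to a boundary vertex. -/
lemma eb_card_le (F : Finset Γ.E) :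
    ((Γ.Eb (↑(Γ.vertsOf F \ Γ.bdry F) : Set Γ.V)).ncard : ℝ)
      ≤ ∑ w ∈ Γ.bdry F, (Γ.degIn F w : ℝ) := by
  set X : Finset Γ.V := Γ.vertsOf F \ Γ.bdry F with hX
  set B : Finset Γ.E :=
    (Γ.bdry F).biUnion (fun w => F.filter (fun e => (Γ.ends e).1 = w ∨ (Γ.ends e).2 = w)) with hB
  have hmemF : ∀ {v : Γ.V} {e : Γ.E}, v ∈ X → ((Γ.ends e).1 = v ∨ (Γ.ends e).2 = v) → e ∈ F := by
    intro v e hv hinc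
    obtain ⟨hv1, hv2⟩ := Finset.mem_sdiff.mp hv
    have hfull : Γ.degree v ≤ Γ.degIn F v := by
      by_contra hcon
      exact hv2 (Finset.mem_filter.mpr ⟨hv1, lt_of_not_ge hcon⟩)
    have := Γ.filter_eq_of_full hfull
    have heme : e ∈ F.filter (fun e => (Γ.ends e).1 = v ∨ (Γ.ends e).2 = v) := by
      rw [this]; exact (Γ.mem_locfin_toFinset).mpr hinc
    exact (Finset.mem_filter.mp heme).1
  have hsub : Γ.Eb (↑X : Set Γ.V) ⊆ (↑B : Set Γ.E) := by
    intro e he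
    rcases he with ⟨h1, h2⟩ | ⟨h1, h2⟩
    · have h1' : (Γ.ends e).1 ∈ X := by exact_mod_cast h1
      have h2' : (Γ.ends e).2 ∉ X := fun h => h2 (by exact_mod_cast h)
      have heF : e ∈ F := hmemF h1' (Or.inl rfl)
      have hbd : (Γ.ends e).2 ∈ Γ.bdry F := by
        by_contra hc
        exact h2' (Finset.mem_sdiff.mpr ⟨Γ.mem_vertsOf_of_snd heF, hc⟩)
      exact Finset.mem_coe.mpr (Finset.mem_biUnion.mpr
        ⟨(Γ.ends e).2, hbd, Finset.mem_filter.mpr ⟨heF, Or.inr rfl⟩⟩)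
    · have h1' : (Γ.ends e).2 ∈ X := by exact_mod_cast h1
      have h2' : (Γ.ends e).1 ∉ X := fun h => h2 (by exact_mod_cast h)
      have heF : e ∈ F := hmemF h1' (Or.inr rfl)
      have hbd : (Γ.ends e).1 ∈ Γ.bdry F := by
        by_contra hc
        exact h2' (Finset.mem_sdiff.mpr ⟨Γ.mem_vertsOf_of_fst heF, hc⟩)
      exact Finset.mem_coe.mpr (Finset.mem_biUnion.mpr
        ⟨(Γ.ends e).1, hbd, Finset.mem_filter.mpr ⟨heF, Or.inl rfl⟩⟩)
  have hnc : (Γ.Eb (↑X : Set Γ.V)).ncard ≤ B.card := by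
    have := Set.ncard_le_ncard hsub (B.finite_toSet)
    rwa [Set.ncard_coe_finset] at this
  have hcard : B.card ≤ ∑ w ∈ Γ.bdry F, Γ.degIn F w := Finset.card_biUnion_le
  calc ((Γ.Eb (↑X : Set Γ.V)).ncard : ℝ) ≤ (B.card : ℝ) := by exact_mod_cast hnc
    _ ≤ ∑ w ∈ Γ.bdry F, (Γ.degIn F w : ℝ) := by exact_mod_cast hcard

/-- The key estimate: `2 mes(F) ≤ deg(∂F) (1/a + L)`. -/
lemma key_estimate (F : Finset Γ.E) {a L : ℝ} (ha : 0 < a)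
    (hL : ∀ e, Γ.len e ≤ L)
    (haD : ∀ X : Finset Γ.V, X.Nonempty →
      Γ.alphaD Set.univ ≤ ((Γ.Eb (↑X : Set Γ.V)).ncard : ℝ) / ∑ v ∈ X, Γ.mweight v)
    (haeq : a = Γ.alphaD Set.univ) :
    2 * Γ.mes F ≤ Γ.degBdry F * (1/a + L) := by
  set X : Finset Γ.V := Γ.vertsOf F \ Γ.bdry F with hX
  have hbsub : Γ.bdry F ⊆ Γ.vertsOf F := Finset.filter_subset _ _
  have hsplit : (∑ v ∈ X, ∑ e ∈ F.filter (fun e => (Γ.ends e).1 = v ∨ (Γ.ends e).2 = v), Γ.len e)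
      + ∑ v ∈ Γ.bdry F, ∑ e ∈ F.filter (fun e => (Γ.ends e).1 = v ∨ (Γ.ends e).2 = v), Γ.len e
      = ∑ v ∈ Γ.vertsOf F,
          ∑ e ∈ F.filter (fun e => (Γ.ends e).1 = v ∨ (Γ.ends e).2 = v), Γ.len e :=
    Finset.sum_sdiff hbsub
  have hdegnn : 0 ≤ Γ.degBdry F :=
    Finset.sum_nonneg fun v _ => Nat.cast_nonneg _
  -- interior part
  have hint : ∀ v ∈ X,
      (∑ e ∈ F.filter (fun e => (Γ.ends e).1 = v ∨ (Γ.ends e).2 = v), Γ.len e) = Γ.mweight v := by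
    intro v hv
    obtain ⟨hv1, hv2⟩ := Finset.mem_sdiff.mp hv
    have hfull : Γ.degree v ≤ Γ.degIn F v := by
      by_contra hcon
      exact hv2 (Finset.mem_filter.mpr ⟨hv1, lt_of_not_ge hcon⟩)
    rw [Γ.filter_eq_of_full hfull]; rfl
  have hintsum :
      (∑ v ∈ X, ∑ e ∈ F.filter (fun e => (Γ.ends e).1 = v ∨ (Γ.ends e).2 = v), Γ.len e)
        ≤ Γ.degBdry F / a := by
    rw [Finset.sum_congr rfl hint]
    rcases X.eq_empty_or_nonempty with hXe | hXne
    · rw [hXe, Finset.sum_empty]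
      positivity
    · have hm : 0 < ∑ v ∈ X, Γ.mweight v :=
        Finset.sum_pos (fun v hv => Γ.mweight_pos_of_mem_vertsOf
          (Finset.mem_sdiff.mp hv).1) hXne
      have h1 : a ≤ ((Γ.Eb (↑X : Set Γ.V)).ncard : ℝ) / ∑ v ∈ X, Γ.mweight v :=
        haeq ▸ haD X hXne
      have h2 : a * ∑ v ∈ X, Γ.mweight v ≤ ((Γ.Eb (↑X : Set Γ.V)).ncard : ℝ) :=
        (le_div_iff₀ hm).mp h1
      have h3 : ((Γ.Eb (↑X : Set Γ.V)).ncard : ℝ) ≤ Γ.degBdry F := Γ.eb_card_le F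
      rw [le_div_iff₀ ha, mul_comm]
      linarith
  -- boundary part
  have hbd : ∀ v ∈ Γ.bdry F,
      (∑ e ∈ F.filter (fun e => (Γ.ends e).1 = v ∨ (Γ.ends e).2 = v), Γ.len e)
        ≤ (Γ.degIn F v : ℝ) * L := by
    intro v _
    calc (∑ e ∈ F.filter (fun e => (Γ.ends e).1 = v ∨ (Γ.ends e).2 = v), Γ.len e)
        ≤ ∑ _e ∈ F.filter (fun e => (Γ.ends e).1 = v ∨ (Γ.ends e).2 = v), L :=
          Finset.sum_le_sum fun e _ => hL e
      _ = (Γ.degIn F v : ℝ) * L := by rw [Finset.sum_const, degIn]; simp [mul_comm]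
  have hbdsum :
      (∑ v ∈ Γ.bdry F, ∑ e ∈ F.filter (fun e => (Γ.ends e).1 = v ∨ (Γ.ends e).2 = v), Γ.len e)
        ≤ Γ.degBdry F * L := by
    calc (∑ v ∈ Γ.bdry F, ∑ e ∈ F.filter (fun e => (Γ.ends e).1 = v ∨ (Γ.ends e).2 = v), Γ.len e)
        ≤ ∑ v ∈ Γ.bdry F, (Γ.degIn F v : ℝ) * L := Finset.sum_le_sum hbd
      _ = Γ.degBdry F * L := by rw [degBdry, Finset.sum_mul]
  rw [Γ.two_mes_eq F, ← hsplit]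
  have : Γ.degBdry F * (1/a + L) = Γ.degBdry F / a + Γ.degBdry F * L := by ring
  rw [this]
  exact add_le_add hintsum hbdsum

/-- Any vertex contains the full data needed: singleton edge gives a finite
connected subgraph. -/
lemma isFinSubgraph_singleton (e₀ : Γ.E) : Γ.IsFinSubgraph {e₀} := by
  refine ⟨Finset.singleton_nonempty _, ?_⟩
  unfold SubConn
  have hu : (Γ.ends e₀).1 ∈ Γ.vertsOf {e₀} := Γ.mem_vertsOf_of_fst (Finset.mem_singleton_self _)
  have hv : (Γ.ends e₀).2 ∈ Γ.vertsOf {e₀} := Γ.mem_vertsOf_of_snd (Finset.mem_singleton_self _)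
  have hmem : ∀ w ∈ Γ.vertsOf {e₀}, w = (Γ.ends e₀).1 ∨ w = (Γ.ends e₀).2 := by
    intro w hw
    rcases Finset.mem_union.mp hw with h | h <;>
      · simp only [Finset.mem_image, Finset.mem_singleton] at h
        obtain ⟨e, rfl, rfl⟩ := h
        simp
  set G' : SimpleGraph Γ.V :=
    SimpleGraph.fromRel (fun u v => ∃ e ∈ ({e₀} : Finset Γ.E), Γ.ends e = (u, v)) with hG'
  have hadj : G'.Adj (Γ.ends e₀).1 (Γ.ends e₀).2 := by
    rw [hG', SimpleGraph.fromRel_adj]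
    exact ⟨Γ.no_loops e₀, Or.inl ⟨e₀, Finset.mem_singleton_self _, rfl⟩⟩
  rw [SimpleGraph.connected_iff]
  refine ⟨?_, ⟨⟨(Γ.ends e₀).1, hu⟩⟩⟩
  · intro x y
    have hx := hmem x.1 (Finset.mem_coe.mp x.2)
    have hy := hmem y.1 (Finset.mem_coe.mp y.2)
    rcases hx with hx | hx <;> rcases hy with hy | hy
    · exact (Subtype.ext (hx.trans hy.symm) : x = y) ▸ SimpleGraph.Reachable.refl x
    · refine SimpleGraph.Adj.reachable ?_
      simp only [SimpleGraph.comap_adj, Function.Embedding.coe_subtype, hx, hy]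
      exact hadj
    · refine SimpleGraph.Adj.reachable ?_
      simp only [SimpleGraph.comap_adj, Function.Embedding.coe_subtype, hx, hy]
      exact hadj.symm
    · exact (Subtype.ext (hx.trans hy.symm) : x = y) ▸ SimpleGraph.Reachable.refl x

end MetricGraph

end Aux

/-- **Lemma 4.1 (second inequality).** `2/α(G) ≤ 1/α_d(V) + ℓ*(G)`,
with the convention `1/0 = +∞` (an inequality in `[0,∞]`). -/
theorem two_div_alpha_le (Γ : MetricGraph) :
    2 / ENNReal.ofReal Γ.alpha ≤
      1 / ENNReal.ofReal (Γ.alphaD Set.univ) + Γ.ellSupEnn := by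
  set a := Γ.alphaD Set.univ with haeq
  by_cases hapos : 0 < a
  swap
  · rw [ENNReal.ofReal_eq_zero.mpr (le_of_not_gt hapos)]
    simp
  by_cases hLtop : Γ.ellSupEnn = ⊤
  · rw [hLtop]
    simp
  set L := Γ.ellSupEnn.toReal with hLdef
  have hL0 : 0 ≤ L := ENNReal.toReal_nonneg
  have hLe : ∀ e, Γ.len e ≤ L := by
    intro e
    have h1 : ENNReal.ofReal (Γ.len e) ≤ Γ.ellSupEnn :=
      le_iSup (fun e => ENNReal.ofReal (Γ.len e)) e
    have := ENNReal.toReal_mono hLtop h1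
    rwa [ENNReal.toReal_ofReal (Γ.len_pos e).le] at this
  have haD : ∀ X : Finset Γ.V, X.Nonempty →
      Γ.alphaD Set.univ ≤ ((Γ.Eb (↑X : Set Γ.V)).ncard : ℝ) / ∑ v ∈ X, Γ.mweight v := by
    intro X hX
    apply csInf_le
    · refine ⟨0, ?_⟩
      rintro r ⟨Y, -, -, rfl⟩
      exact div_nonneg (Nat.cast_nonneg _)
        (Finset.sum_nonneg fun v _ => Γ.mweight_nonneg v)
    · exact ⟨X, by simp, hX, rfl⟩
  have hcpos : 0 < 1/a + L := by positivity
  -- lower bound for alpha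
  obtain ⟨e₀⟩ : Nonempty Γ.E := @Infinite.nonempty _ Γ.infE
  have halpha : 2 / (1/a + L) ≤ Γ.alpha := by
    apply le_csInf
    · exact ⟨_, {e₀}, Γ.isFinSubgraph_singleton e₀, rfl⟩
    · rintro r ⟨F, hF, rfl⟩
      have hmes : 0 < Γ.mes F := Finset.sum_pos (fun e _ => Γ.len_pos e) hF.1
      have h2 := Γ.key_estimate F hapos hLe haD haeq
      have hdeg : 0 < Γ.degBdry F := by
        by_contra h
        push_neg at h
        nlinarith
      rw [div_le_div_iff₀ hcpos hmes]
      nlinarith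
  have hαpos : 0 < Γ.alpha := lt_of_lt_of_le (by positivity) halpha
  have hineq : (2 : ℝ) / Γ.alpha ≤ 1/a + L := by
    rw [div_le_iff₀ hαpos]
    rw [div_le_iff₀ hcpos] at halpha
    linarith
  calc 2 / ENNReal.ofReal Γ.alpha = ENNReal.ofReal ((2 : ℝ) / Γ.alpha) := by
        rw [ENNReal.ofReal_div_of_pos hαpos]
        norm_num
    _ ≤ ENNReal.ofReal (1/a + L) := ENNReal.ofReal_le_ofReal hineq
    _ = ENNReal.ofReal (1/a) + ENNReal.ofReal L := ENNReal.ofReal_add (by positivity) hL0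
    _ = 1 / ENNReal.ofReal a + Γ.ellSupEnn := by
        rw [ENNReal.ofReal_toReal hLtop, one_div, one_div,
          ENNReal.ofReal_inv_of_pos hapos]
end
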